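/- arXiv:2404.06458 — 2 statements merged into one kernel-verified Lean document; each statement's English description precedes it below -/
import Mathlib

section
/- Let $p_c > 1$ and let $Y : [R_0, \infty) \to (0,\infty)$ be a nondecreasing differentiable function with $Y(R_0) > 0$. Let $\mu : [0,\infty) \to [0,\infty)$ be nondecreasing, and suppose there exist constants $C, C_0 > 0$ and $a > 0$ such that for all $R > R_0$: $\frac{1}{CR}\, \mu\!\left( \frac{Y(R_0)}{C_0 R^{a}} \right) \leq \frac{C_0^{p_c}\, Y'(R)}{Y(R)^{p_c}}$. Then for all $R > R_0$, $\int_{R_0}^R \frac{1}{s}\,\mu\!\left(\frac{Y(R_0)}{C_0 s^a}\right) ds \leq \frac{C\, C_0^{p_c}}{p_c - 1}\, Y(R_0)^{1 - p_c}$. Consequently, if $\int_0^{c_0} \frac{\mu(\tau)}{\tau}\,d\tau = \infty$ for every $c_0 > 0$, then no such function $Y$ can exist. -/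
open MeasureTheory Real

theorem stmt_10 (pc R0 C C0 a : ℝ) (hpc : 1 < pc) (hR0 : 0 < R0)
    (hC : 0 < C) (hC0 : 0 < C0) (ha : 0 < a)
    (Y : ℝ → ℝ) (hYpos : ∀ R ∈ Set.Ici R0, 0 < Y R)
    (hYmono : MonotoneOn Y (Set.Ici R0)) (hYdiff : Differentiable ℝ Y)
    (μ : ℝ → ℝ) (hμnn : ∀ τ, 0 ≤ μ τ) (hμmono : Monotone μ)
    (hkey : ∀ R > R0,
      (1 / (C * R)) * μ (Y R0 / (C0 * R ^ a)) ≤ C0 ^ pc * deriv Y R / Y R ^ pc) :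
    (∀ R > R0,
      ∫ s in R0..R, (1 / s) * μ (Y R0 / (C0 * s ^ a)) ≤
        C * C0 ^ pc / (pc - 1) * Y R0 ^ (1 - pc)) ∧
    ((∀ c0 > 0, ¬ IntegrableOn (fun τ => μ τ / τ) (Set.Ioo 0 c0) volume) →
      False) := by
  have hY0 : 0 < Y R0 := hYpos R0 (le_refl R0)
  have hpc1 : (0:ℝ) < pc - 1 := sub_pos.mpr hpc
  have hK0 : 0 < C * C0 ^ pc := mul_pos hC (rpow_pos_of_pos hC0 pc)
  set g : ℝ → ℝ := fun s => (1 / s) * μ (Y R0 / (C0 * s ^ a)) with hgdef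
  -- g is antitone on Ici R0
  have hganti : AntitoneOn g (Set.Ici R0) := by
    intro x hx y hy hxy
    have hx0 : 0 < x := lt_of_lt_of_le hR0 hx
    have hy0 : 0 < y := lt_of_lt_of_le hR0 hy
    have h1 : 1 / y ≤ 1 / x := one_div_le_one_div_of_le hx0 hxy
    have hxa : C0 * x ^ a ≤ C0 * y ^ a :=
      mul_le_mul_of_nonneg_left (Real.rpow_le_rpow hx0.le hxy ha.le) hC0.le
    have harg : Y R0 / (C0 * y ^ a) ≤ Y R0 / (C0 * x ^ a) :=
      div_le_div_of_nonneg_left hY0.le (by positivity) hxa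
    exact mul_le_mul h1 (hμmono harg) (hμnn _) (by positivity)
  -- part 1
  have part1 : ∀ R > R0, (∫ s in R0..R, g s) ≤
      C * C0 ^ pc / (pc - 1) * Y R0 ^ (1 - pc) := by
    intro R hR
    set F : ℝ → ℝ := fun s => -(C * C0 ^ pc / (pc - 1)) * Y s ^ (1 - pc) with hFdef
    have hcont : ContinuousOn F (Set.Icc R0 R) := by
      apply continuousOn_const.mul
      apply ContinuousOn.rpow_const hYdiff.continuous.continuousOn
      exact fun x hx => Or.inl (hYpos x hx.1).ne'
    have hderiv : ∀ x ∈ Set.Ioo R0 R,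
        HasDerivAt F (C * C0 ^ pc * deriv Y x / Y x ^ pc) x := by
      intro x hx
      have hYx : 0 < Y x := hYpos x (le_of_lt hx.1)
      have h1 : HasDerivAt (fun s => Y s ^ (1 - pc))
          (deriv Y x * (1 - pc) * Y x ^ (1 - pc - 1)) x :=
        ((hYdiff x).hasDerivAt).rpow_const (Or.inl hYx.ne')
      have h2 := h1.const_mul (-(C * C0 ^ pc / (pc - 1)))
      refine h2.congr_deriv ?_
      have hexp : Y x ^ (1 - pc - 1) = (Y x ^ pc)⁻¹ := by
        rw [show (1 - pc - 1 : ℝ) = -pc by ring, Real.rpow_neg hYx.le]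
      rw [hexp]
      have hYpc : Y x ^ pc ≠ 0 := (Real.rpow_pos_of_pos hYx pc).ne'
      field_simp
      ring
    have hint : IntegrableOn g (Set.Icc R0 R) :=
      AntitoneOn.integrableOn_isCompact isCompact_Icc
        (hganti.mono Set.Icc_subset_Ici_self)
    have hle : ∀ x ∈ Set.Ioo R0 R, g x ≤ C * C0 ^ pc * deriv Y x / Y x ^ pc := by
      intro x hx
      have hx0 : 0 < x := lt_trans hR0 hx.1
      have hk := mul_le_mul_of_nonneg_left (hkey x hx.1) hC.le
      calc g x = C * ((1 / (C * x)) * μ (Y R0 / (C0 * x ^ a))) := by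
            simp only [hgdef]
            field_simp
        _ ≤ C * (C0 ^ pc * deriv Y x / Y x ^ pc) := hk
        _ = C * C0 ^ pc * deriv Y x / Y x ^ pc := by ring
    have key := intervalIntegral.integral_le_sub_of_hasDeriv_right_of_le (le_of_lt hR)
      hcont (fun x hx => (hderiv x hx).hasDerivWithinAt) hint hle
    have hYR : 0 < Y R ^ (1 - pc) := Real.rpow_pos_of_pos (hYpos R hR.le) _
    have hKpos : 0 < C * C0 ^ pc / (pc - 1) := div_pos hK0 hpc1
    have : F R - F R0 ≤ C * C0 ^ pc / (pc - 1) * Y R0 ^ (1 - pc) := by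
      simp only [hFdef]
      nlinarith [mul_pos hKpos hYR]
    exact key.trans this
  refine ⟨part1, fun H => ?_⟩
  -- Part 2
  set c : ℝ := Y R0 / C0 with hcdef
  have hc : 0 < c := div_pos hY0 hC0
  have hRa : 0 < R0 ^ a := Real.rpow_pos_of_pos hR0 a
  set c0 : ℝ := c / R0 ^ a with hc0def
  have hc0 : 0 < c0 := div_pos hc hRa
  -- g is integrable on Ioi R0
  have hGIoi : IntegrableOn g (Set.Ioi R0) volume := by
    apply MeasureTheory.integrableOn_Ioi_of_intervalIntegral_norm_bounded
      (C * C0 ^ pc / (pc - 1) * Y R0 ^ (1 - pc)) R0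
      (b := fun n : ℕ => R0 + 1 + n) (l := Filter.atTop)
    · intro n
      exact (AntitoneOn.integrableOn_isCompact isCompact_Icc
        (hganti.mono Set.Icc_subset_Ici_self)).mono_set Set.Ioc_subset_Icc_self
    · apply Filter.tendsto_atTop_add_const_left
      exact tendsto_natCast_atTop_atTop
    · apply Filter.Eventually.of_forall
      intro n
      have hn : (0:ℝ) ≤ (n:ℝ) := Nat.cast_nonneg n
      have hRn : R0 < R0 + 1 + n := by linarith
      have hEq : Set.EqOn (fun x => ‖g x‖) g (Set.uIcc R0 (R0 + 1 + n)) := by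
        intro x hx
        rw [Set.uIcc_of_le hRn.le] at hx
        have hx0 : 0 < x := lt_of_lt_of_le hR0 hx.1
        have : 0 ≤ g x := mul_nonneg (by positivity) (hμnn _)
        simp [Real.norm_of_nonneg this]
      rw [intervalIntegral.integral_congr hEq]
      exact part1 _ hRn
  -- change of variables
  set φ : ℝ → ℝ := fun x => c * x ^ (-a) with hφdef
  set φ' : ℝ → ℝ := fun x => c * (-a * x ^ (-a - 1)) with hφ'def
  have hφd : ∀ x ∈ Set.Ioi R0, HasDerivWithinAt φ (φ' x) (Set.Ioi R0) x := by
    intro x hx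
    have hx0 : 0 < x := lt_trans hR0 hx
    exact ((Real.hasDerivAt_rpow_const (p := -a) (Or.inl hx0.ne')).const_mul c).hasDerivWithinAt
  have hφinj : Set.InjOn φ (Set.Ioi R0) := by
    have hanti : StrictAntiOn φ (Set.Ioi R0) := by
      intro x hx y hy hxy
      have hx0 : 0 < x := lt_trans hR0 hx
      exact mul_lt_mul_of_pos_left
        (Real.rpow_lt_rpow_of_neg hx0 hxy (neg_lt_zero.mpr ha)) hc
    exact hanti.injOn
  have heq : ∀ x ∈ Set.Ioi R0, (a : ℝ) * g x = |φ' x| • ((fun τ => μ τ / τ) (φ x)) := by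
    intro x hx
    have hx0 : 0 < x := lt_trans hR0 hx
    have hxna : (0:ℝ) < x ^ (-a) := Real.rpow_pos_of_pos hx0 _
    have hxp : (0:ℝ) < x ^ (-a - 1) := Real.rpow_pos_of_pos hx0 _
    have hφx : φ x = Y R0 / (C0 * x ^ a) := by
      simp only [hφdef, hcdef]
      rw [Real.rpow_neg hx0.le]
      have hxa : (0:ℝ) < x ^ a := Real.rpow_pos_of_pos hx0 a
      field_simp
    have h1 : |φ' x| = c * (a * x ^ (-a - 1)) := by
      simp only [hφ'def]
      rw [abs_mul, abs_mul, abs_of_pos hc, abs_neg, abs_of_pos ha, abs_of_pos hxp]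
    have hsplit : x ^ (-a - 1) = x ^ (-a) * x⁻¹ := by
      rw [show (-a - 1 : ℝ) = -a + -1 by ring, Real.rpow_add hx0, Real.rpow_neg_one]
    show a * ((1 / x) * μ (Y R0 / (C0 * x ^ a))) = |φ' x| * (μ (φ x) / φ x)
    have hxa : (0:ℝ) < x ^ a := Real.rpow_pos_of_pos hx0 a
    rw [h1, hsplit, hφx, Real.rpow_neg hx0.le]
    simp only [hcdef]
    field_simp
  have hInt2 : IntegrableOn (fun x => |φ' x| • ((fun τ => μ τ / τ) (φ x)))
      (Set.Ioi R0) volume :=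
    MeasureTheory.IntegrableOn.congr_fun (hGIoi.const_mul a) heq measurableSet_Ioi
  have himg : IntegrableOn (fun τ => μ τ / τ) (φ '' Set.Ioi R0) volume :=
    (integrableOn_image_iff_integrableOn_abs_deriv_smul measurableSet_Ioi hφd hφinj
      (fun τ => μ τ / τ)).mpr hInt2
  have hsub : Set.Ioo 0 c0 ⊆ φ '' Set.Ioi R0 := by
    intro τ hτ
    have hτ0 : 0 < τ := hτ.1
    have hcτ : 0 < c / τ := div_pos hc hτ0
    have ha' : a ≠ 0 := ha.ne'
    have h2 : R0 ^ a < c / τ := by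
      rw [lt_div_iff₀ hτ0]
      have h3 := (lt_div_iff₀ hRa).mp hτ.2
      nlinarith
    refine ⟨(c / τ) ^ (1 / a), ?_, ?_⟩
    · show R0 < (c / τ) ^ (1 / a)
      have hbase : R0 = (R0 ^ a) ^ (1 / a) := by
        rw [← Real.rpow_mul hR0.le, mul_one_div, div_self ha', Real.rpow_one]
      rw [hbase]
      exact Real.rpow_lt_rpow hRa.le h2 (by positivity)
    · show c * ((c / τ) ^ (1 / a)) ^ (-a) = τ
      rw [← Real.rpow_mul hcτ.le, one_div, inv_mul_eq_div,
        show -a / a = -1 by field_simp, Real.rpow_neg_one, inv_div]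
      field_simp
  exact H c0 hc0 (himg.mono_set hsub)
end

section
/- Let $p_c > 1$, let $\bar\varepsilon > 0$, and let $\mu : [0,\infty) \to [0,\infty)$ be nondecreasing, bounded on $[0,\bar\varepsilon]$ by $M$, and satisfy $\int_0^{\bar\varepsilon} \frac{\mu(\tau)}{\tau}\,d\tau < \infty$. Then there exists $C > 0$ such that for all $t \geq 0$: $\int_0^t (1+t-s)^{-1/p_c}\,(1+s)^{-1}\,\mu\!\big(\bar\varepsilon(1+s)^{-1/p_c}\big)\,ds \leq C\,(1+t)^{-1/p_c}$. -/
open MeasureTheory Real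

set_option maxHeartbeats 1000000

theorem stmt_12 (pc eps M : ℝ) (hpc : 1 < pc) (heps : 0 < eps)
    (μ : ℝ → ℝ) (hnn : ∀ τ, 0 ≤ μ τ) (hmono : Monotone μ)
    (hbdd : ∀ τ ∈ Set.Icc 0 eps, μ τ ≤ M)
    (hint : IntegrableOn (fun τ => μ τ / τ) (Set.Ioo 0 eps) volume) :
    ∃ C > 0, ∀ t : ℝ, 0 ≤ t →
      ∫ s in (0:ℝ)..t,
          (1 + t - s) ^ (-(1 / pc)) * (1 + s)⁻¹ * μ (eps * (1 + s) ^ (-(1 / pc)))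
        ≤ C * (1 + t) ^ (-(1 / pc)) := by
  have hpc0 : (0:ℝ) < pc := lt_trans one_pos hpc
  set q : ℝ := 1 / pc with hqdef
  have hq0 : 0 < q := by positivity
  have hq1 : q < 1 := by rw [hqdef, div_lt_one hpc0]; exact hpc
  have hM : 0 ≤ M := le_trans (hnn 0) (hbdd 0 ⟨le_refl 0, heps.le⟩)
  have hμm : Measurable μ := hmono.measurable
  set I : ℝ := ∫ τ in Set.Ioo 0 eps, μ τ / τ with hIdef
  have hI0 : 0 ≤ I := setIntegral_nonneg measurableSet_Ioo
    (fun τ hτ => div_nonneg (hnn τ) hτ.1.le)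
  set φ : ℝ → ℝ := fun s => eps * (1 + s) ^ (-q) with hφdef
  have hφpos : ∀ s : ℝ, 0 ≤ s → 0 < φ s := by
    intro s hs
    have h1 : (0:ℝ) < 1 + s := by linarith
    exact mul_pos heps (Real.rpow_pos_of_pos h1 _)
  have hφle : ∀ s : ℝ, 0 ≤ s → φ s ≤ eps := by
    intro s hs
    have h1 : (1:ℝ) ≤ 1 + s := by linarith
    have := Real.rpow_le_one_of_one_le_of_nonpos h1 (neg_nonpos.mpr hq0.le)
    calc eps * (1 + s) ^ (-q) ≤ eps * 1 := by
          exact mul_le_mul_of_nonneg_left this heps.le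
      _ = eps := mul_one eps
  have hμb : ∀ s : ℝ, 0 ≤ s → μ (φ s) ≤ M := by
    intro s hs
    exact hbdd _ ⟨(hφpos s hs).le, hφle s hs⟩
  -- continuity of φ on [0,∞)
  have hφcont : ContinuousOn φ (Set.Ici (0:ℝ)) := by
    apply ContinuousOn.mul continuousOn_const
    apply ContinuousOn.rpow_const
    · exact (continuous_const.add continuous_id).continuousOn
    · intro x hx
      left
      have : (0:ℝ) < 1 + x := by
        simp only [Set.mem_Ici] at hx; linarith
      exact ne_of_gt this
  -- key substitution bound
  have hsubst : ∀ T : ℝ, 0 ≤ T →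
      ∫ s in Set.Ioo 0 T, (1 + s)⁻¹ * μ (φ s) ≤ pc * I := by
    intro T hT
    set ψ : ℝ → ℝ := fun x => eps * (-q * (1 + x) ^ (-q - 1)) with hψdef
    have hderiv : ∀ x ∈ Set.Ioo (0:ℝ) T, HasDerivWithinAt φ (ψ x) (Set.Ioo 0 T) x := by
      intro x hx
      have h1 : (0:ℝ) < 1 + x := by have := hx.1; linarith
      have h2 : HasDerivAt (fun s : ℝ => 1 + s) 1 x := by
        simpa using (hasDerivAt_id x).const_add (1:ℝ)
      have h3 : HasDerivAt (fun s : ℝ => (1 + s) ^ (-q)) (1 * (-q) * (1 + x) ^ (-q - 1)) x :=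
        h2.rpow_const (Or.inl h1.ne')
      have h4 := h3.const_mul eps
      have h5 : HasDerivAt φ (ψ x) x := by
        refine (h4.congr_deriv ?_)
        symm
        show eps * (-q * (1 + x) ^ (-q - 1)) = eps * (1 * -q * (1 + x) ^ (-q - 1))
        ring
      exact h5.hasDerivWithinAt
    have hinj : Set.InjOn φ (Set.Ioo 0 T) := by
      intro a ha b hb hab
      by_contra hne
      rcases lt_or_gt_of_ne hne with h | h
      · have h1a : (0:ℝ) < 1 + a := by have := ha.1; linarith
        have := Real.rpow_lt_rpow_of_neg h1a (by linarith : 1 + a < 1 + b)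
          (neg_neg_iff_pos.mpr hq0 : -q < 0)
        have : φ b < φ a := by
          exact mul_lt_mul_of_pos_left this heps
        rw [hab] at this; exact lt_irrefl _ this
      · have h1b : (0:ℝ) < 1 + b := by have := hb.1; linarith
        have := Real.rpow_lt_rpow_of_neg h1b (by linarith : 1 + b < 1 + a)
          (neg_neg_iff_pos.mpr hq0 : -q < 0)
        have : φ a < φ b := by
          exact mul_lt_mul_of_pos_left this heps
        rw [hab] at this; exact lt_irrefl _ this
    have himg : φ '' Set.Ioo 0 T ⊆ Set.Ioo 0 eps := by
      rintro _ ⟨x, hx, rfl⟩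
      refine ⟨hφpos x hx.1.le, ?_⟩
      have h1 : (1:ℝ) < 1 + x := by have := hx.1; linarith
      have := Real.rpow_lt_one_of_one_lt_of_neg h1 (neg_neg_iff_pos.mpr hq0 : -q < 0)
      calc eps * (1 + x) ^ (-q) < eps * 1 := mul_lt_mul_of_pos_left this heps
        _ = eps := mul_one eps
    have hcov := integral_image_eq_integral_abs_deriv_smul measurableSet_Ioo hderiv hinj
      (fun τ => μ τ / τ)
    have hptwise : ∀ x ∈ Set.Ioo (0:ℝ) T,
        |ψ x| • (μ (φ x) / φ x) = q * ((1 + x)⁻¹ * μ (φ x)) := by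
      intro x hx
      have h1 : (0:ℝ) < 1 + x := by have := hx.1; linarith
      have hrp : (0:ℝ) < (1 + x) ^ (-q - 1) := Real.rpow_pos_of_pos h1 _
      have hrp2 : (0:ℝ) < (1 + x) ^ (-q) := Real.rpow_pos_of_pos h1 _
      have habs : |ψ x| = eps * q * (1 + x) ^ (-q - 1) := by
        rw [hψdef]
        have hle : eps * (-q * (1 + x) ^ (-q - 1)) ≤ 0 := by
          have h := mul_pos heps (mul_pos hq0 hrp)
          have heq2 : eps * (-q * (1 + x) ^ (-q - 1))
              = -(eps * (q * (1 + x) ^ (-q - 1))) := by ring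
          rw [heq2]
          exact neg_nonpos.mpr h.le
        rw [abs_of_nonpos hle]
        ring
      have hsplit : (1 + x) ^ (-q - 1) = (1 + x) ^ (-q) * (1 + x)⁻¹ := by
        rw [show -q - 1 = -q + (-1) by ring, Real.rpow_add h1, Real.rpow_neg_one]
      rw [smul_eq_mul, habs, hsplit]
      have hφx : φ x = eps * (1 + x) ^ (-q) := rfl
      rw [hφx]
      field_simp
    have heq : ∫ x in Set.Ioo (0:ℝ) T, |ψ x| • (μ (φ x) / φ x)
        = ∫ x in Set.Ioo (0:ℝ) T, q * ((1 + x)⁻¹ * μ (φ x)) :=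
      setIntegral_congr_fun measurableSet_Ioo hptwise
    have hintq : ∫ x in Set.Ioo (0:ℝ) T, q * ((1 + x)⁻¹ * μ (φ x))
        = q * ∫ x in Set.Ioo (0:ℝ) T, (1 + x)⁻¹ * μ (φ x) := by
      exact integral_const_mul q _
    have hsub : ∫ τ in φ '' Set.Ioo 0 T, μ τ / τ ≤ I := by
      rw [hIdef]
      refine setIntegral_mono_set hint ?_ (HasSubset.Subset.eventuallyLE himg)
      filter_upwards [ae_restrict_mem measurableSet_Ioo] with τ hτ
      exact div_nonneg (hnn τ) hτ.1.le
    have : q * ∫ x in Set.Ioo (0:ℝ) T, (1 + x)⁻¹ * μ (φ x) ≤ I := by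
      rw [← hintq, ← heq, ← hcov]; exact hsub
    have hqI : ∫ x in Set.Ioo (0:ℝ) T, (1 + x)⁻¹ * μ (φ x) ≤ I / q :=
      (le_div_iff₀' hq0).mpr this
    calc ∫ x in Set.Ioo (0:ℝ) T, (1 + x)⁻¹ * μ (φ x) ≤ I / q := hqI
      _ = pc * I := by rw [hqdef]; field_simp
  -- integrability of the full integrand on [0,t]
  have hIcc : ∀ t : ℝ, 0 ≤ t → IntegrableOn
      (fun s => (1 + t - s) ^ (-q) * (1 + s)⁻¹ * μ (φ s)) (Set.Icc 0 t) := by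
    intro t ht
    have c1 : ContinuousOn (fun s : ℝ => (1 + t - s) ^ (-q)) (Set.Icc 0 t) := by
      apply ContinuousOn.rpow_const
      · exact (continuous_const.sub continuous_id).continuousOn
      · intro x hx
        left
        have : (0:ℝ) < 1 + t - x := by have := hx.2; simp only [Set.mem_Icc] at hx; linarith [hx.2]
        exact ne_of_gt this
    have c2 : ContinuousOn (fun s : ℝ => (1 + s)⁻¹) (Set.Icc 0 t) := by
      apply ContinuousOn.inv₀ (continuous_const.add continuous_id).continuousOn
      intro x hx
      simp only [Set.mem_Icc] at hx
      have : (0:ℝ) < 1 + x := by linarith [hx.1]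
      exact ne_of_gt this
    have c3 : AEMeasurable (fun s => μ (φ s)) (volume.restrict (Set.Icc 0 t)) := by
      apply hμm.comp_aemeasurable
      exact ((hφcont.mono (fun x hx => hx.1)).aemeasurable measurableSet_Icc)
    have hmeas : AEStronglyMeasurable
        (fun s => (1 + t - s) ^ (-q) * (1 + s)⁻¹ * μ (φ s))
        (volume.restrict (Set.Icc 0 t)) :=
      (((c1.aemeasurable measurableSet_Icc).mul (c2.aemeasurable measurableSet_Icc)).mul
        c3).aestronglyMeasurable
    refine Integrable.mono' (g := fun _ => M)
      (integrableOn_const (C := M) measure_Icc_lt_top.ne) hmeas ?_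
    filter_upwards [ae_restrict_mem measurableSet_Icc] with s hs
    simp only [Set.mem_Icc] at hs
    have h1ts : (1:ℝ) ≤ 1 + t - s := by linarith [hs.2]
    have ha0 : (0:ℝ) ≤ (1 + t - s) ^ (-q) := Real.rpow_nonneg (by linarith) _
    have ha1 : (1 + t - s) ^ (-q) ≤ 1 :=
      Real.rpow_le_one_of_one_le_of_nonpos h1ts (neg_nonpos.mpr hq0.le)
    have hb0 : (0:ℝ) ≤ (1 + s)⁻¹ := inv_nonneg.mpr (by linarith [hs.1])
    have hb1 : (1 + s)⁻¹ ≤ 1 := by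
      rw [inv_le_one_iff₀]; right; linarith [hs.1]
    have hm0 : 0 ≤ μ (φ s) := hnn _
    have hmM : μ (φ s) ≤ M := hμb s hs.1
    rw [Real.norm_eq_abs, abs_of_nonneg (mul_nonneg (mul_nonneg ha0 hb0) hm0)]
    have hab : (1 + t - s) ^ (-q) * (1 + s)⁻¹ ≤ 1 :=
      mul_le_one₀ ha1 hb0 hb1
    calc (1 + t - s) ^ (-q) * (1 + s)⁻¹ * μ (φ s) ≤ 1 * M :=
          mul_le_mul hab hmM hm0 one_pos.le
      _ = M := one_mul M
  -- integrability of the half integrand on [0,t]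
  have hGint : ∀ t : ℝ, 0 ≤ t → IntegrableOn
      (fun s => (1 + s)⁻¹ * μ (φ s)) (Set.Icc 0 t) := by
    intro t ht
    have c2 : ContinuousOn (fun s : ℝ => (1 + s)⁻¹) (Set.Icc 0 t) := by
      apply ContinuousOn.inv₀ (continuous_const.add continuous_id).continuousOn
      intro x hx
      simp only [Set.mem_Icc] at hx
      have : (0:ℝ) < 1 + x := by linarith [hx.1]
      exact ne_of_gt this
    have c3 : AEMeasurable (fun s => μ (φ s)) (volume.restrict (Set.Icc 0 t)) := by
      apply hμm.comp_aemeasurable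
      exact ((hφcont.mono (fun x hx => hx.1)).aemeasurable measurableSet_Icc)
    have hmeas : AEStronglyMeasurable (fun s => (1 + s)⁻¹ * μ (φ s))
        (volume.restrict (Set.Icc 0 t)) :=
      ((c2.aemeasurable measurableSet_Icc).mul c3).aestronglyMeasurable
    refine Integrable.mono' (g := fun _ => M)
      (integrableOn_const (C := M) measure_Icc_lt_top.ne) hmeas ?_
    filter_upwards [ae_restrict_mem measurableSet_Icc] with s hs
    simp only [Set.mem_Icc] at hs
    have hb0 : (0:ℝ) ≤ (1 + s)⁻¹ := inv_nonneg.mpr (by linarith [hs.1])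
    have hb1 : (1 + s)⁻¹ ≤ 1 := by
      rw [inv_le_one_iff₀]; right; linarith [hs.1]
    have hm0 : 0 ≤ μ (φ s) := hnn _
    have hmM : μ (φ s) ≤ M := hμb s hs.1
    rw [Real.norm_eq_abs, abs_of_nonneg (mul_nonneg hb0 hm0)]
    calc (1 + s)⁻¹ * μ (φ s) ≤ 1 * M := mul_le_mul hb1 hmM hm0 one_pos.le
      _ = M := one_mul M
  refine ⟨2 * pc * I + 2 * M / (1 - q) + 1, ?_, ?_⟩
  · have h1 : 0 ≤ 2 * pc * I := mul_nonneg (by positivity) hI0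
    have h2 : 0 ≤ 2 * M / (1 - q) := div_nonneg (by linarith) (by linarith)
    linarith
  intro t ht
  have ht2 : (0:ℝ) ≤ t / 2 := by linarith
  have ht2t : t / 2 ≤ t := by linarith
  have h1t : (0:ℝ) < 1 + t := by linarith
  have hF : IntegrableOn (fun s => (1 + t - s) ^ (-q) * (1 + s)⁻¹ * μ (φ s))
      (Set.Icc 0 t) := hIcc t ht
  have hFi1 : IntervalIntegrable (fun s => (1 + t - s) ^ (-q) * (1 + s)⁻¹ * μ (φ s))
      volume 0 (t / 2) := by
    refine (hF.mono_set ?_).intervalIntegrable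
    rw [Set.uIcc_of_le ht2]
    exact Set.Icc_subset_Icc le_rfl ht2t
  have hFi2 : IntervalIntegrable (fun s => (1 + t - s) ^ (-q) * (1 + s)⁻¹ * μ (φ s))
      volume (t / 2) t := by
    refine (hF.mono_set ?_).intervalIntegrable
    rw [Set.uIcc_of_le ht2t]
    exact Set.Icc_subset_Icc ht2 le_rfl
  have hsplit : ∫ s in (0:ℝ)..t, (1 + t - s) ^ (-q) * (1 + s)⁻¹ * μ (φ s)
      = (∫ s in (0:ℝ)..(t/2), (1 + t - s) ^ (-q) * (1 + s)⁻¹ * μ (φ s))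
        + ∫ s in (t/2)..t, (1 + t - s) ^ (-q) * (1 + s)⁻¹ * μ (φ s) :=
    (intervalIntegral.integral_add_adjacent_intervals hFi1 hFi2).symm
  -- first piece
  have hGi : IntervalIntegrable (fun s => (1 + t/2) ^ (-q) * ((1 + s)⁻¹ * μ (φ s)))
      volume 0 (t/2) := by
    have h0 : IntegrableOn (fun s => (1 + s)⁻¹ * μ (φ s)) (Set.uIcc 0 (t/2)) := by
      refine (hGint t ht).mono_set ?_
      rw [Set.uIcc_of_le ht2]
      exact Set.Icc_subset_Icc le_rfl ht2t
    have h1 : IntegrableOn (fun s => (1 + t/2) ^ (-q) * ((1 + s)⁻¹ * μ (φ s)))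
        (Set.uIcc 0 (t/2)) := h0.const_mul _
    exact h1.intervalIntegrable
  have hA : ∫ s in (0:ℝ)..(t/2), (1 + t - s) ^ (-q) * (1 + s)⁻¹ * μ (φ s)
      ≤ (1 + t/2) ^ (-q) * (pc * I) := by
    have hmono1 : ∫ s in (0:ℝ)..(t/2), (1 + t - s) ^ (-q) * (1 + s)⁻¹ * μ (φ s)
        ≤ ∫ s in (0:ℝ)..(t/2), (1 + t/2) ^ (-q) * ((1 + s)⁻¹ * μ (φ s)) := by
      apply intervalIntegral.integral_mono_on ht2 hFi1 hGi
      intro s hs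
      simp only [Set.mem_Icc] at hs
      have h1 : 1 + t/2 ≤ 1 + t - s := by linarith [hs.2]
      have hrle : (1 + t - s) ^ (-q) ≤ (1 + t/2) ^ (-q) :=
        Real.rpow_le_rpow_of_nonpos (by linarith) h1 (neg_nonpos.mpr hq0.le)
      have hnn2 : 0 ≤ (1 + s)⁻¹ * μ (φ s) :=
        mul_nonneg (inv_nonneg.mpr (by linarith [hs.1])) (hnn _)
      calc (1 + t - s) ^ (-q) * (1 + s)⁻¹ * μ (φ s)
          = (1 + t - s) ^ (-q) * ((1 + s)⁻¹ * μ (φ s)) := by ring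
        _ ≤ (1 + t/2) ^ (-q) * ((1 + s)⁻¹ * μ (φ s)) :=
            mul_le_mul_of_nonneg_right hrle hnn2
    have hcm : ∫ s in (0:ℝ)..(t/2), (1 + t/2) ^ (-q) * ((1 + s)⁻¹ * μ (φ s))
        = (1 + t/2) ^ (-q) * ∫ s in (0:ℝ)..(t/2), (1 + s)⁻¹ * μ (φ s) :=
      intervalIntegral.integral_const_mul _ _
    have h2 : ∫ s in (0:ℝ)..(t/2), (1 + s)⁻¹ * μ (φ s) ≤ pc * I := by
      rw [intervalIntegral.integral_of_le ht2, integral_Ioc_eq_integral_Ioo]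
      exact hsubst (t/2) ht2
    have hrp0 : (0:ℝ) ≤ (1 + t/2) ^ (-q) := Real.rpow_nonneg (by linarith) _
    calc ∫ s in (0:ℝ)..(t/2), (1 + t - s) ^ (-q) * (1 + s)⁻¹ * μ (φ s)
        ≤ (1 + t/2) ^ (-q) * ∫ s in (0:ℝ)..(t/2), (1 + s)⁻¹ * μ (φ s) := by
          rw [← hcm]; exact hmono1
      _ ≤ (1 + t/2) ^ (-q) * (pc * I) := mul_le_mul_of_nonneg_left h2 hrp0
  -- comparison of (1+t/2)^(-q) with 2*(1+t)^(-q)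
  have hhalf : (1 + t/2) ^ (-q) ≤ 2 * (1 + t) ^ (-q) := by
    have h1 : (0:ℝ) < (1 + t) / 2 := by linarith
    have h2 : (1 + t) / 2 ≤ 1 + t/2 := by linarith
    have h3 : (1 + t/2) ^ (-q) ≤ ((1 + t) / 2) ^ (-q) :=
      Real.rpow_le_rpow_of_nonpos h1 h2 (neg_nonpos.mpr hq0.le)
    have h4 : ((1 + t) / 2) ^ (-q) = (1 + t) ^ (-q) * 2 ^ q := by
      rw [Real.div_rpow (by linarith) (by norm_num),
        Real.rpow_neg (by norm_num : (0:ℝ) ≤ 2), div_eq_mul_inv, inv_inv]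
    have h5 : (2:ℝ) ^ q ≤ 2 := by
      calc (2:ℝ) ^ q ≤ 2 ^ (1:ℝ) := Real.rpow_le_rpow_of_exponent_le one_le_two hq1.le
        _ = 2 := Real.rpow_one 2
    have h6 : (0:ℝ) ≤ (1 + t) ^ (-q) := Real.rpow_nonneg (by linarith) _
    calc (1 + t/2) ^ (-q) ≤ (1 + t) ^ (-q) * 2 ^ q := by rw [← h4]; exact h3
      _ ≤ (1 + t) ^ (-q) * 2 := mul_le_mul_of_nonneg_left h5 h6
      _ = 2 * (1 + t) ^ (-q) := by ring
  -- second piece: FTC computation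
  have hcont2 : ContinuousOn (fun s : ℝ => (1 + t - s) ^ (-q)) (Set.uIcc (t/2) t) := by
    apply ContinuousOn.rpow_const
    · exact (continuous_const.sub continuous_id).continuousOn
    · intro x hx
      rw [Set.uIcc_of_le ht2t] at hx
      left
      have : (0:ℝ) < 1 + t - x := by linarith [hx.2]
      exact ne_of_gt this
  have hFTC : ∫ s in (t/2)..t, (1 + t - s) ^ (-q)
      = (1 / (1 - q)) * ((1 + t/2) ^ (1 - q) - 1) := by
    have hd : ∀ x ∈ Set.uIcc (t/2) t,
        HasDerivAt (fun s => -(1 / (1 - q)) * (1 + t - s) ^ (1 - q)) ((1 + t - x) ^ (-q)) x := by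
      intro x hx
      rw [Set.uIcc_of_le ht2t] at hx
      have h1 : (0:ℝ) < 1 + t - x := by linarith [hx.2]
      have h2 : HasDerivAt (fun s : ℝ => 1 + t - s) (-1) x := by
        simpa using (hasDerivAt_id x).const_sub (1 + t)
      have h3 := (h2.rpow_const (p := 1 - q) (Or.inl h1.ne')).const_mul (-(1 / (1 - q)))
      refine h3.congr_deriv ?_
      rw [show (1:ℝ) - q - 1 = -q by ring]
      have hne : (1:ℝ) - q ≠ 0 := ne_of_gt (by linarith)
      field_simp
    have := intervalIntegral.integral_eq_sub_of_hasDerivAt hd hcont2.intervalIntegrable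
    rw [this]
    rw [show 1 + t - t = (1:ℝ) by ring, show 1 + t - t/2 = 1 + t/2 by ring, Real.one_rpow]
    ring
  have hB : ∫ s in (t/2)..t, (1 + t - s) ^ (-q) * (1 + s)⁻¹ * μ (φ s)
      ≤ (2 * M * (1 + t)⁻¹) * ((1 / (1 - q)) * ((1 + t/2) ^ (1 - q) - 1)) := by
    rw [← hFTC, ← intervalIntegral.integral_const_mul]
    apply intervalIntegral.integral_mono_on ht2t hFi2 (hcont2.intervalIntegrable.const_mul _)
    intro s hs
    simp only [Set.mem_Icc] at hs
    have hs0 : (0:ℝ) ≤ s := le_trans ht2 hs.1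
    have ha0 : (0:ℝ) ≤ (1 + t - s) ^ (-q) := Real.rpow_nonneg (by linarith [hs.2]) _
    have hinv : (1 + s)⁻¹ ≤ 2 * (1 + t)⁻¹ := by
      have h2 : (1 + t) / 2 ≤ 1 + s := by linarith [hs.1]
      have h3 : (1 + s)⁻¹ ≤ ((1 + t) / 2)⁻¹ := by
        apply inv_anti₀ (by linarith) h2
      calc (1 + s)⁻¹ ≤ ((1 + t) / 2)⁻¹ := h3
        _ = 2 * (1 + t)⁻¹ := by rw [inv_div]; ring
    have hinner : (1 + s)⁻¹ * μ (φ s) ≤ (2 * (1 + t)⁻¹) * M :=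
      mul_le_mul hinv (hμb s hs0) (hnn _) (by positivity)
    calc (1 + t - s) ^ (-q) * (1 + s)⁻¹ * μ (φ s)
        = (1 + t - s) ^ (-q) * ((1 + s)⁻¹ * μ (φ s)) := by ring
      _ ≤ (1 + t - s) ^ (-q) * ((2 * (1 + t)⁻¹) * M) :=
          mul_le_mul_of_nonneg_left hinner ha0
      _ = 2 * M * (1 + t)⁻¹ * (1 + t - s) ^ (-q) := by ring
  -- simplify the bound of the second piece
  have hBval : (2 * M * (1 + t)⁻¹) * ((1 / (1 - q)) * ((1 + t/2) ^ (1 - q) - 1))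
      ≤ (2 * M / (1 - q)) * (1 + t) ^ (-q) := by
    have hup : (1 + t/2) ^ (1 - q) - 1 ≤ (1 + t) ^ (1 - q) := by
      have := Real.rpow_le_rpow (by linarith : (0:ℝ) ≤ 1 + t/2)
        (by linarith : 1 + t/2 ≤ 1 + t) (by linarith : (0:ℝ) ≤ 1 - q)
      linarith
    have hc0 : (0:ℝ) ≤ 2 * M * (1 + t)⁻¹ * (1 / (1 - q)) :=
      mul_nonneg (mul_nonneg (by linarith) (inv_nonneg.mpr h1t.le))
        (one_div_nonneg.mpr (by linarith))
    have hpoweq : (1 + t) ^ (1 - q) = (1 + t) * (1 + t) ^ (-q) := by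
      rw [show (1:ℝ) - q = 1 + -q by ring, Real.rpow_add h1t, Real.rpow_one]
    calc (2 * M * (1 + t)⁻¹) * ((1 / (1 - q)) * ((1 + t/2) ^ (1 - q) - 1))
        = (2 * M * (1 + t)⁻¹ * (1 / (1 - q))) * ((1 + t/2) ^ (1 - q) - 1) := by ring
      _ ≤ (2 * M * (1 + t)⁻¹ * (1 / (1 - q))) * ((1 + t) ^ (1 - q)) :=
          mul_le_mul_of_nonneg_left hup hc0
      _ = (2 * M / (1 - q)) * (1 + t) ^ (-q) := by
          rw [hpoweq]
          have hne : (1 + t) ≠ 0 := ne_of_gt h1t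
          have hcancel : (1 + t)⁻¹ * (1 + t) = 1 := inv_mul_cancel₀ hne
          calc 2 * M * (1 + t)⁻¹ * (1 / (1 - q)) * ((1 + t) * (1 + t) ^ (-q))
              = 2 * M * (1 / (1 - q)) * (1 + t) ^ (-q) * ((1 + t)⁻¹ * (1 + t)) := by
                ring
            _ = 2 * M / (1 - q) * (1 + t) ^ (-q) := by rw [hcancel]; ring
  have hpow0 : (0:ℝ) < (1 + t) ^ (-q) := Real.rpow_pos_of_pos h1t _
  have hpcI0 : (0:ℝ) ≤ pc * I := mul_nonneg hpc0.le hI0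
  calc ∫ s in (0:ℝ)..t, (1 + t - s) ^ (-q) * (1 + s)⁻¹ * μ (φ s)
      = (∫ s in (0:ℝ)..(t/2), (1 + t - s) ^ (-q) * (1 + s)⁻¹ * μ (φ s))
        + ∫ s in (t/2)..t, (1 + t - s) ^ (-q) * (1 + s)⁻¹ * μ (φ s) := hsplit
    _ ≤ (1 + t/2) ^ (-q) * (pc * I)
        + (2 * M * (1 + t)⁻¹) * ((1 / (1 - q)) * ((1 + t/2) ^ (1 - q) - 1)) :=
        add_le_add hA hB
    _ ≤ (2 * (1 + t) ^ (-q)) * (pc * I) + (2 * M / (1 - q)) * (1 + t) ^ (-q) :=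
        add_le_add (mul_le_mul_of_nonneg_right hhalf hpcI0) hBval
    _ = (2 * pc * I + 2 * M / (1 - q)) * (1 + t) ^ (-q) := by ring
    _ ≤ (2 * pc * I + 2 * M / (1 - q) + 1) * (1 + t) ^ (-q) :=
        mul_le_mul_of_nonneg_right (by linarith) hpow0.le
end
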